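/- arXiv:1112.0383 — 3 statements merged into one kernel-verified Lean document; each statement's English description precedes it below -/
import Mathlib

section
/- For any set of N unit vectors {v_1,…,v_N} in C^n and any integer k ≥ 1, Σ_{i=1}^N Σ_{j=1}^N |⟨v_i, v_j⟩|^{2k} ≥ N² / C(n+k−1,k), where C(n+k−1,k) is the binomial coefficient. -/
/-!
Writing `x ↦ symPow k x` for the coordinates of the symmetric tensor power `x^{⊗k}` in an
orthonormal basis of `Sym^k ℂⁿ` (indexed by multisets `m` of size `k`, weighted by the square root
of the multinomial coefficient of `m`), the multinomial theorem gives
`⟨x^{⊗k}, y^{⊗k}⟩ = ⟨x, y⟩ ^ k`. This reduces the bound to `k = 1` in dimension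
`d = C(n + k - 1, k)`: for unit rows of `U`, `∑ |⟨uᵢ, uⱼ⟩|² = ‖U Uᴴ‖²_F = ‖Uᴴ U‖²_F`, which is at least
the sum of the squared diagonal entries of `Uᴴ U`, hence at least `(tr Uᴴ U)² / d = N² / d`
by Cauchy–Schwarz.
-/

open Complex Finset

noncomputable def inn (n : ℕ) [NeZero n] (φ ψ : ZMod n → ℂ) : ℂ :=
  ∑ t : ZMod n, φ t * (starRingEnd ℂ) (ψ t)

noncomputable def ML (n : ℕ) [NeZero n] (w τ : ZMod n) (ψ : ZMod n → ℂ) : ZMod n → ℂ :=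
  fun t => Complex.exp (2 * Real.pi * Complex.I * ((w.val * t.val : ℕ) : ℝ) / n) * ψ (t + τ)

noncomputable def Lsh (n : ℕ) [NeZero n] (τ : ZMod n) (ψ : ZMod n → ℂ) : ZMod n → ℂ :=
  fun t => ψ (t + τ)

noncomputable def Msh (n : ℕ) [NeZero n] (w : ZMod n) (ψ : ZMod n → ℂ) : ZMod n → ℂ :=
  fun t => Complex.exp (2 * Real.pi * Complex.I * ((w.val * t.val : ℕ) : ℝ) / n) * ψ t

def IsUnitSignal (n : ℕ) [NeZero n] (φ : ZMod n → ℂ) : Prop :=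
  ∑ t : ZMod n, ‖φ t‖ ^ 2 = 1

open scoped Matrix

namespace Matrix

variable {𝕜 ι α : Type*} [RCLike 𝕜] [Fintype ι] [Fintype α]

theorem trace_mul_conjTranspose_eq_sum_norm_sq (M : Matrix ι α 𝕜) :
    (M * Mᴴ).trace = ((∑ i, ∑ a, ‖M i a‖ ^ 2 : ℝ) : 𝕜) := by
  simp [trace, mul_apply, RCLike.mul_conj]

theorem sum_norm_sq_mul_conjTranspose_eq (A : Matrix ι α 𝕜) :
    ∑ i, ∑ j, ‖(A * Aᴴ) i j‖ ^ 2 = ∑ a, ∑ b, ‖(Aᴴ * A) a b‖ ^ 2 := by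
  have h : (A * Aᴴ * (A * Aᴴ)ᴴ).trace = (Aᴴ * A * (Aᴴ * A)ᴴ).trace := by
    simpa [Matrix.mul_assoc] using trace_mul_comm A (Aᴴ * A * Aᴴ)
  rwa [trace_mul_conjTranspose_eq_sum_norm_sq, trace_mul_conjTranspose_eq_sum_norm_sq,
    RCLike.ofReal_inj] at h

theorem norm_trace_sq_le_card_mul_sum_norm_sq (M : Matrix α α 𝕜) :
    ‖M.trace‖ ^ 2 ≤ Fintype.card α * ∑ a, ∑ b, ‖M a b‖ ^ 2 :=
  calc ‖M.trace‖ ^ 2 ≤ (∑ a, ‖M a a‖) ^ 2 := by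
        gcongr; exact norm_sum_le _ _
    _ ≤ Fintype.card α * ∑ a, ‖M a a‖ ^ 2 := sq_sum_le_card_mul_sum_sq
    _ ≤ Fintype.card α * ∑ a, ∑ b, ‖M a b‖ ^ 2 := by
        gcongr with a
        exact single_le_sum (f := fun b => ‖M a b‖ ^ 2) (fun _ _ => by positivity) (mem_univ a)

theorem card_sq_div_card_le_sum_norm_sq_mul_conjTranspose (A : Matrix ι α 𝕜) (hA : ∀ i, (A * Aᴴ) i i = 1) :
    (Fintype.card ι : ℝ) ^ 2 / Fintype.card α ≤ ∑ i, ∑ j, ‖(A * Aᴴ) i j‖ ^ 2 := by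
  have htrace : (Aᴴ * A).trace = Fintype.card ι := by
    rw [trace_mul_comm, trace]
    simp [hA]
  refine div_le_of_le_mul₀ (by positivity) (by positivity) ?_
  calc (Fintype.card ι : ℝ) ^ 2 = ‖(Aᴴ * A).trace‖ ^ 2 := by simp [htrace]
    _ ≤ _ := norm_trace_sq_le_card_mul_sum_norm_sq _
    _ = _ := by rw [sum_norm_sq_mul_conjTranspose_eq, mul_comm]

end Matrix

section SymPow

variable {𝕜 α : Type*} [RCLike 𝕜] [Fintype α] [DecidableEq α]

noncomputable def symPow (k : ℕ) (x : α → 𝕜) (m : Sym α k) : 𝕜 :=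
  (√(m.val.countPerms : ℝ) : 𝕜) * (m.val.map x).prod

theorem sum_symPow_mul_conj (k : ℕ) (x y : α → 𝕜) :
    ∑ m, symPow k x m * starRingEnd 𝕜 (symPow k y m) = (∑ a, x a * starRingEnd 𝕜 (y a)) ^ k := by
  rw [sum_pow, sym_univ]
  refine sum_congr rfl fun m _ => ?_
  have hsqrt : (√(m.val.countPerms : ℝ) : 𝕜) * (√(m.val.countPerms : ℝ) : 𝕜) = m.val.countPerms := by
    rw [← RCLike.ofReal_mul, Real.mul_self_sqrt (Nat.cast_nonneg _),
      RCLike.ofReal_natCast]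
  simp only [symPow, map_mul, RCLike.conj_ofReal, map_multiset_prod,
    Multiset.map_map, Function.comp_def, Multiset.prod_map_mul]
  rw [← hsqrt]; ring

end SymPow

theorem stmt_7_general (n N k : ℕ) (v : Fin N → Fin n → ℂ)
    (hunit : ∀ i, ∑ t, ‖v i t‖ ^ 2 = 1) :
    (N : ℝ) ^ 2 / ((n + k - 1).choose k : ℝ) ≤
      ∑ i : Fin N, ∑ j : Fin N,
        ‖∑ t, v i t * (starRingEnd ℂ) (v j t)‖ ^ (2 * k) := by
  let A : Matrix (Fin N) (Sym (Fin n) k) ℂ := Matrix.of fun i => symPow k (v i)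
  have hgram : ∀ i j, (A * Aᴴ) i j = (∑ t, v i t * (starRingEnd ℂ) (v j t)) ^ k := by
    intro i j
    simp [A, Matrix.mul_apply, sum_symPow_mul_conj]
  have hdiag : ∀ i, (A * Aᴴ) i i = 1 := by
    intro i
    simp [hgram, mul_conj', ← ofReal_pow, ← ofReal_sum, hunit]
  have welch := Matrix.card_sq_div_card_le_sum_norm_sq_mul_conjTranspose A hdiag
  simp only [Fintype.card_fin, Sym.card_sym_eq_choose, hgram, norm_pow, ← pow_mul] at welch
  simpa only [mul_comm k 2] using welch

theorem stmt_7 (n N k : ℕ) (hk : 1 ≤ k) (v : Fin N → Fin n → ℂ)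
    (hunit : ∀ i, ∑ t, ‖v i t‖ ^ 2 = 1) :
    (N : ℝ) ^ 2 / ((n + k - 1).choose k : ℝ) ≤
      ∑ i : Fin N, ∑ j : Fin N,
        ‖∑ t, v i t * (starRingEnd ℂ) (v j t)‖ ^ (2 * k) :=
  stmt_7_general n N k v hunit
end

section
/- Let p be prime, q = p^l, n = q − 1, T : F_q → F_p the trace map, γ a primitive element of F_q, and define the unit signal φ on Z_n by φ(i) = (1/√n) ζ_p^{T(γ^i)} where ζ_p = e^{2πi/p}. Then for all (w,τ) ∈ Z_n² with (w,τ) ≠ (0,0): |⟨φ, M_w L_τ φ⟩| ≤ √(n+1)/n; and moreover λ_{φ} := max over such (w,τ) equals √(n+1)/n when n ≥ 2. -/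
/-!
Write `ψ(x) = ζ_p^{T(x)}`, a nontrivial additive character of `F`, and `χ_w` for the
multiplicative character with `χ_w(γ^t) = e^{2πiwt/n}`. Substituting `u = γ^t` turns
`⟨φ, M_w L_τ φ⟩` into `n⁻¹ G(χ_w⁻¹, ψ(b ·))` with `b = 1 - γ^τ`. Since `b ≠ 0` iff `τ ≠ 0` and
`χ_w ≠ 1` iff `w ≠ 0`, this Gauss sum has absolute value `√q = √(n+1)` when `w, τ ≠ 0`,
equals `-1` when only `τ ≠ 0` and vanishes when only `w ≠ 0`; the bound is attained at
`(w, τ) = (1, 1)`.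
-/

open Complex Finset

open ComplexConjugate

lemma sum_units_eq_sum {G₀ M : Type*} [GroupWithZero G₀] [Fintype G₀] [DecidableEq G₀]
    [AddCommMonoid M] {f : G₀ → M} (hf : f 0 = 0) : ∑ u : G₀ˣ, f u = ∑ x, f x := by
  have h0 : ∑ x : {x : G₀ // ¬x ≠ 0}, f x = 0 :=
    Fintype.sum_eq_zero _ fun x => by rw [show (x : G₀) = 0 from not_not.mp x.2, hf]
  rw [← Fintype.sum_subtype_add_sum_subtype (· ≠ 0) f, h0, add_zero]
  exact Fintype.sum_equiv unitsEquivNeZero _ _ fun _ => rfl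

section GaussSum

variable {F : Type*} [Field F] [Fintype F]

lemma norm_gaussSum_eq_sqrt_card {χ : MulChar F ℂ} (hχ : χ ≠ 1) {ψ : AddChar F ℂ} (hψ : ψ ≠ 1) :
    ‖gaussSum χ ψ‖ = √(Fintype.card F) := by
  have h := gaussSum_mul_gaussSum_eq_card hχ (AddChar.IsPrimitive.of_ne_one hψ)
  rw [← star_gaussSum_eq, RCLike.star_def, mul_conj, ← ofReal_natCast] at h
  rw [← Real.sqrt_sq (norm_nonneg _), ← normSq_eq_norm_sq, ofReal_inj.mp h]

lemma norm_gaussSum_le_sqrt_card {χ : MulChar F ℂ} {ψ : AddChar F ℂ} (h : χ ≠ 1 ∨ ψ ≠ 1) :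
    ‖gaussSum χ ψ‖ ≤ √(Fintype.card F) := by
  by_cases hψ : ψ = 1
  · subst hψ
    simp [gaussSum_one_right (h.resolve_right (not_not.mpr rfl))]
  by_cases hχ : χ = 1
  · subst hχ
    rw [gaussSum_one_left hψ, norm_neg, norm_one, Real.one_le_sqrt]
    exact_mod_cast Fintype.card_pos
  exact (norm_gaussSum_eq_sqrt_card hχ hψ).le

end GaussSum

section ZModVal

variable {M : Type*} [Monoid M] {n : ℕ} [NeZero n] {γ : M}

lemma pow_val_add (h : γ ^ n = 1) (s t : ZMod n) : γ ^ (s + t).val = γ ^ s.val * γ ^ t.val := by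
  rw [ZMod.val_add, ← pow_add, ← pow_eq_pow_mod _ h]

lemma pow_val_ne_one (h : orderOf γ = n) {t : ZMod n} (ht : t ≠ 0) : γ ^ t.val ≠ 1 :=
  pow_ne_one_of_lt_orderOf ((ZMod.val_ne_zero t).mpr ht) (h ▸ ZMod.val_lt t)

end ZModVal

section CyclicUnits

variable {M : Type*} [CommMonoid M] {γ : Mˣ} (hγ : ∀ x, x ∈ Subgroup.zpowers γ)
  {n : ℕ} (hn : Nat.card Mˣ = n)

include hγ hn in
lemma orderOf_val_eq : orderOf (γ : M) = n := by
  rw [orderOf_units, orderOf_eq_card_of_forall_mem_zpowers hγ, hn]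

variable [NeZero n]

lemma zmodMulEquivOfGenerator_apply_ofAdd (t : ZMod n) :
    zmodMulEquivOfGenerator hγ hn (Multiplicative.ofAdd t) = γ ^ t.val := by
  conv_lhs => rw [← ZMod.natCast_zmod_val t, ← Int.cast_natCast]
  rw [zmodMulEquivOfGenerator_apply_ofAdd_intCast, zpow_natCast]

include hγ hn in
lemma sum_pow_val_eq_sum_units {β : Type*} [AddCommMonoid β] [Fintype Mˣ] (f : Mˣ → β) :
    ∑ t : ZMod n, f (γ ^ t.val) = ∑ u : Mˣ, f u :=
  Fintype.sum_equiv (Multiplicative.ofAdd.trans (zmodMulEquivOfGenerator hγ hn).toEquiv) _ _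
    fun t => by simp [zmodMulEquivOfGenerator_apply_ofAdd hγ hn]

noncomputable def expMulChar (w : ZMod n) : MulChar M ℂ :=
  MulChar.ofUnitHom <| (ZMod.stdAddChar.mulShift w).toMonoidHom.toHomUnits.comp
    (zmodMulEquivOfGenerator hγ hn).symm.toMonoidHom

lemma expMulChar_apply_pow_val (w t : ZMod n) :
    expMulChar hγ hn w ((γ : M) ^ t.val) = ZMod.stdAddChar (w * t) := by
  rw [← Units.val_pow_eq_pow_val, expMulChar, MulChar.ofUnitHom_coe,
    ← zmodMulEquivOfGenerator_apply_ofAdd hγ hn]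
  simp

lemma expMulChar_ne_one {w : ZMod n} (hw : w ≠ 0) : expMulChar hγ hn w ≠ 1 := by
  intro h
  have h1 := expMulChar_apply_pow_val hγ hn w 1
  rw [h, MulChar.one_apply (γ.isUnit.pow _), mul_one,
    ← AddChar.map_zero_eq_one (ZMod.stdAddChar (N := n)), ZMod.injective_stdAddChar.eq_iff] at h1
  exact hw h1.symm

end CyclicUnits

noncomputable def traceAddChar (p : ℕ) [Fact p.Prime] (F : Type*) [Field F] [Algebra (ZMod p) F] :
    AddChar F ℂ :=
  ZMod.stdAddChar.compAddMonoidHom (Algebra.trace (ZMod p) F).toAddMonoidHom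

section TraceAddChar

variable (p : ℕ) [Fact p.Prime] {F : Type*} [Field F] [Algebra (ZMod p) F]

lemma traceAddChar_apply (x : F) : traceAddChar p F x =
    exp (2 * Real.pi * I * (((Algebra.trace (ZMod p) F x).val : ℝ)) / p) := by
  rw [traceAddChar, AddChar.compAddMonoidHom_apply, ZMod.stdAddChar_apply, ZMod.toCircle_apply,
    ofReal_natCast]
  rfl

lemma traceAddChar_ne_one [Finite F] : traceAddChar p F ≠ 1 := by
  obtain ⟨x, hx⟩ := Algebra.trace_surjective (ZMod p) F 1
  refine AddChar.ne_one_iff.mpr ⟨x, ?_⟩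
  rw [traceAddChar, AddChar.compAddMonoidHom_apply, LinearMap.toAddMonoidHom_coe, hx,
    ← AddChar.map_zero_eq_one (ZMod.stdAddChar (N := p)), ZMod.injective_stdAddChar.ne_iff]
  exact one_ne_zero

end TraceAddChar

lemma exp_val_mul_val_eq_stdAddChar (n : ℕ) [NeZero n] (w t : ZMod n) :
    exp (2 * Real.pi * I * ((w.val * t.val : ℕ) : ℝ) / n) = ZMod.stdAddChar (w * t) := by
  have : ((w.val * t.val : ℕ) : ZMod n) = w * t := by simp
  rw [← this, ZMod.stdAddChar_apply, ZMod.toCircle_natCast, ofReal_natCast]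

lemma inn_ML_eq_gaussSum {F : Type*} [Field F] [Fintype F] {γ : Fˣ}
    (hγ : ∀ x, x ∈ Subgroup.zpowers γ) {n : ℕ} [NeZero n] (hn : Nat.card Fˣ = n)
    (ψ : AddChar F ℂ) (c : ℝ) (φ : ZMod n → ℂ) (hφ : ∀ t, φ t = c * ψ ((γ : F) ^ t.val))
    (w τ : ZMod n) :
    inn n φ (ML n w τ φ) =
      c ^ 2 * gaussSum (expMulChar hγ hn w)⁻¹ (ψ.mulShift (1 - (γ : F) ^ τ.val)) := by
  classical
  set χ := expMulChar hγ hn w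
  have hγn : (γ : F) ^ n = 1 := by
    rw [← Units.val_pow_eq_pow_val, ← hn, pow_card_eq_one', Units.val_one]
  have hterm (t : ZMod n) : φ t * conj (ML n w τ φ t) =
      c ^ 2 * (χ⁻¹ ((γ : F) ^ t.val) * ψ.mulShift (1 - (γ : F) ^ τ.val) ((γ : F) ^ t.val)) := by
    have hχ : conj (ZMod.stdAddChar (w * t)) = χ⁻¹ ((γ : F) ^ t.val) := by
      rw [← expMulChar_apply_pow_val hγ hn, ← MulChar.star_apply', RCLike.star_def]
    have hψ : ψ ((γ : F) ^ t.val) * conj (ψ ((γ : F) ^ (t + τ).val)) =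
        ψ.mulShift (1 - (γ : F) ^ τ.val) ((γ : F) ^ t.val) := by
      rw [← AddChar.map_neg_eq_conj, ← AddChar.map_add_eq_mul, AddChar.mulShift_apply,
        pow_val_add hγn]
      congr 1
      ring
    simp only [ML, hφ, map_mul, exp_val_mul_val_eq_stdAddChar, hχ, conj_ofReal]
    linear_combination (c ^ 2 * χ⁻¹ ((γ : F) ^ t.val)) * hψ
  rw [inn, sum_congr rfl fun t _ => hterm t, ← mul_sum, gaussSum,
    ← sum_units_eq_sum (f := fun x => χ⁻¹ x * ψ.mulShift (1 - (γ : F) ^ τ.val) x)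
      (by rw [MulChar.map_zero, zero_mul]),
    ← sum_pow_val_eq_sum_units hγ hn]
  simp only [Units.val_pow_eq_pow_val]

lemma mulShift_one_sub_pow_val_ne_one {F : Type*} [Field F] {ψ : AddChar F ℂ} (hψ : ψ ≠ 1)
    {γ : F} {n : ℕ} [NeZero n] (h : orderOf γ = n) {τ : ZMod n} (hτ : τ ≠ 0) :
    ψ.mulShift (1 - γ ^ τ.val) ≠ 1 :=
  AddChar.IsPrimitive.of_ne_one hψ (sub_ne_zero.mpr (pow_val_ne_one h hτ).symm)

section Ambiguity

variable {F : Type*} [Field F] [Fintype F] {γ : Fˣ} (hγ : ∀ x, x ∈ Subgroup.zpowers γ)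
  {n : ℕ} [NeZero n] (hn : Nat.card Fˣ = n) {ψ : AddChar F ℂ} {φ : ZMod n → ℂ}
  (hφ : ∀ t, φ t = (1 / √n : ℝ) * ψ ((γ : F) ^ t.val))

include hφ in
lemma norm_inn_ML_eq_norm_gaussSum (w τ : ZMod n) : ‖inn n φ (ML n w τ φ)‖ =
      ‖gaussSum (expMulChar hγ hn w)⁻¹ (ψ.mulShift (1 - (γ : F) ^ τ.val))‖ / n := by
  rw [inn_ML_eq_gaussSum hγ hn ψ _ φ hφ w τ]
  simp [Real.sq_sqrt (Nat.cast_nonneg n), div_eq_inv_mul]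

include hγ hn hφ in
lemma norm_inn_ML_le (hψ : ψ ≠ 1) {w τ : ZMod n} (hwτ : (w, τ) ≠ (0, 0)) :
    ‖inn n φ (ML n w τ φ)‖ ≤ √(Fintype.card F) / n := by
  rw [norm_inn_ML_eq_norm_gaussSum hγ hn hφ]
  gcongr
  refine norm_gaussSum_le_sqrt_card ?_
  by_cases hw : w = 0
  · exact Or.inr <| mulShift_one_sub_pow_val_ne_one hψ (orderOf_val_eq hγ hn) fun hτ =>
      hwτ (by rw [hw, hτ])
  · exact Or.inl (inv_ne_one.mpr (expMulChar_ne_one hγ hn hw))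

include hγ hn hφ in
lemma norm_inn_ML_eq_of_ne_zero (hψ : ψ ≠ 1) {w τ : ZMod n} (hw : w ≠ 0) (hτ : τ ≠ 0) :
    ‖inn n φ (ML n w τ φ)‖ = √(Fintype.card F) / n := by
  rw [norm_inn_ML_eq_norm_gaussSum hγ hn hφ, norm_gaussSum_eq_sqrt_card
    (inv_ne_one.mpr (expMulChar_ne_one hγ hn hw))
    (mulShift_one_sub_pow_val_ne_one hψ (orderOf_val_eq hγ hn) hτ)]

end Ambiguity

theorem stmt_9_general (p l n : ℕ) [Fact p.Prime] [NeZero n]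
    (F : Type) [Field F] [Fintype F] (hcard : Fintype.card F = p ^ l)
    [Algebra (ZMod p) F] (hn : n = p ^ l - 1)
    (γ : Fˣ) (hγ : ∀ x : Fˣ, x ∈ Subgroup.zpowers γ)
    (φ : ZMod n → ℂ)
    (hφ : ∀ i : ZMod n, φ i = (1 / Real.sqrt n) *
      Complex.exp (2 * Real.pi * Complex.I *
        (((Algebra.trace (ZMod p) F ((γ : F) ^ i.val)).val : ℝ)) / p)) :
    (∀ w τ : ZMod n, (w, τ) ≠ (0, 0) →
      ‖inn n φ (ML n w τ φ)‖ ≤ Real.sqrt ((n : ℝ) + 1) / n) ∧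
    (2 ≤ n → IsGreatest {r : ℝ | ∃ w τ : ZMod n, (w, τ) ≠ (0, 0) ∧
      r = ‖inn n φ (ML n w τ φ)‖} (Real.sqrt ((n : ℝ) + 1) / n)) := by
  classical
  have hunits : Nat.card Fˣ = n := by
    rw [Nat.card_eq_fintype_card, Fintype.card_units, hcard, hn]
  have hq : (Fintype.card F : ℝ) = n + 1 := by
    rw [← hunits, Nat.card_eq_fintype_card, Fintype.card_units,
      Nat.cast_sub Fintype.card_pos, Nat.cast_one, sub_add_cancel]
  have hφ' (t : ZMod n) : φ t = (1 / √n : ℝ) * traceAddChar p F ((γ : F) ^ t.val) := by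
    rw [hφ, traceAddChar_apply, ofReal_div, ofReal_one]
  have hbound (w τ : ZMod n) (hwτ : (w, τ) ≠ (0, 0)) :
      ‖inn n φ (ML n w τ φ)‖ ≤ √((n : ℝ) + 1) / n :=
    hq ▸ norm_inn_ML_le hγ hunits hφ' (traceAddChar_ne_one p) hwτ
  refine ⟨hbound, fun h2 => ⟨?_, fun r ⟨w, τ, hwτ, hr⟩ => hr ▸ hbound w τ hwτ⟩⟩
  have : Fact (1 < n) := ⟨h2⟩
  exact ⟨1, 1, by simp, by
    rw [norm_inn_ML_eq_of_ne_zero hγ hunits hφ' (traceAddChar_ne_one p) one_ne_zero one_ne_zero,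
      hq]⟩

theorem stmt_9 (p l n : ℕ) [Fact p.Prime] [NeZero n] (hl : 0 < l)
    (F : Type) [Field F] [Fintype F] (hcard : Fintype.card F = p ^ l)
    [Algebra (ZMod p) F] (hn : n = p ^ l - 1)
    (γ : Fˣ) (hγ : ∀ x : Fˣ, x ∈ Subgroup.zpowers γ)
    (φ : ZMod n → ℂ)
    (hφ : ∀ i : ZMod n, φ i = (1 / Real.sqrt n) *
      Complex.exp (2 * Real.pi * Complex.I *
        (((Algebra.trace (ZMod p) F ((γ : F) ^ i.val)).val : ℝ)) / p)) :
    (∀ w τ : ZMod n, (w, τ) ≠ (0, 0) →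
      ‖inn n φ (ML n w τ φ)‖ ≤ Real.sqrt ((n : ℝ) + 1) / n) ∧
    (2 ≤ n → IsGreatest {r : ℝ | ∃ w τ : ZMod n, (w, τ) ≠ (0, 0) ∧
      r = ‖inn n φ (ML n w τ φ)‖} (Real.sqrt ((n : ℝ) + 1) / n)) :=
  stmt_9_general p l n F hcard hn γ hγ φ hφ
end

section
/- For any (n, M, λ) unit time-phase signal set S with λ < 1 and M > 1, λ ≥ √( (2nM − n − 1) / ((n+1)(nM − 1)) ). -/
open Complex Finset

/-!
The `n²M` time–frequency shifts `ML n w τ (φ j)` are unit vectors in `ℂⁿ` whose pairwise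
correlations are, up to a unimodular factor, the correlations defining `λ` (`norm_inn_ML_ML`),
so the bound is Levenshtein's bound for `N = n²M` unit vectors.

For unit vectors `x i ∈ ℂⁿ` put `t i j = |⟨x i, x j⟩|²` and `P = x xᴴ`. The kernels `n² t - n`
and `(n+1)(n+2) t² - 4(n+1) t + 2` are positive definite, being Hilbert–Schmidt inner products
`tr (F x * (F y)ᴴ)` of the features `n P - 1` and `(n+1)(n+2) P ⊗ P` corrected by the symmetrised
terms `(P ⊗ 1 + 1 ⊗ P)(1 + W)` and `1 + W` (`W` the flip of `ℂⁿ ⊗ ℂⁿ`) so that its partial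
trace vanishes. Summing over all pairs gives `N² ≤ n ∑ t` and
`4(n+1) ∑ t - 2N² ≤ (n+1)(n+2) ∑ t²`, while `t i j ≤ λ²` off the diagonal gives
`∑ t² ≤ N + λ²(∑ t - N)`; eliminating `∑ t` and `∑ t²` leaves
`λ² ≥ (2N - n² - n) / ((n+1)(N - n))`.
-/

open Matrix Kronecker ComplexConjugate

section TensorSwap

def tensorSwap (κ R : Type*) [Zero R] [One R] [DecidableEq κ] : Matrix (κ × κ) (κ × κ) R :=
  of fun p q => if p = q.swap then 1 else 0

variable {κ R : Type*} [DecidableEq κ]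

theorem conjTranspose_tensorSwap [Semiring R] [StarRing R] :
    (tensorSwap κ R)ᴴ = tensorSwap κ R := by
  ext ⟨s, t⟩ ⟨s', t'⟩
  simp only [tensorSwap, conjTranspose_apply, of_apply, Prod.swap_prod_mk, Prod.mk.injEq]
  split_ifs <;> simp_all

variable [Fintype κ] [CommSemiring R]

theorem tensorSwap_mul_kronecker (A B : Matrix κ κ R) :
    tensorSwap κ R * (A ⊗ₖ B) = (B ⊗ₖ A) * tensorSwap κ R := by
  ext ⟨s, t⟩ ⟨s', t'⟩
  simp [tensorSwap, mul_apply, Fintype.sum_prod_type, Prod.ext_iff, ite_and, mul_comm]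

theorem tensorSwap_mul_kronecker_mul {m : Type*} (A B : Matrix κ κ R) (C : Matrix (κ × κ) m R) :
    tensorSwap κ R * ((A ⊗ₖ B) * C) = (B ⊗ₖ A) * (tensorSwap κ R * C) := by
  rw [← Matrix.mul_assoc, tensorSwap_mul_kronecker, Matrix.mul_assoc]

omit [DecidableEq κ] in
theorem kronecker_mul_kronecker_mul {m : Type*} (A B C D : Matrix κ κ R)
    (E : Matrix (κ × κ) m R) : (A ⊗ₖ B) * ((C ⊗ₖ D) * E) = ((A * C) ⊗ₖ (B * D)) * E := by
  rw [mul_kronecker_mul, Matrix.mul_assoc]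

theorem tensorSwap_mul_self : tensorSwap κ R * tensorSwap κ R = 1 := by
  ext ⟨s, t⟩ ⟨s', t'⟩
  simp [tensorSwap, mul_apply, Fintype.sum_prod_type, Prod.ext_iff, ite_and, one_apply]

theorem trace_kronecker_mul_tensorSwap (A B : Matrix κ κ R) :
    trace ((A ⊗ₖ B) * tensorSwap κ R) = trace (A * B) := by
  simp [tensorSwap, trace, mul_apply, Fintype.sum_prod_type, Prod.ext_iff, ite_and]

theorem trace_tensorSwap : trace (tensorSwap κ R) = Fintype.card κ := by
  simpa [one_kronecker_one] using trace_kronecker_mul_tensorSwap (1 : Matrix κ κ R) 1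

end TensorSwap

section LineProj

variable {κ : Type*} [Fintype κ]

def lineProj (x : κ → ℂ) : Matrix κ κ ℂ := vecMulVec x (star x)

omit [Fintype κ] in
theorem conjTranspose_lineProj (x : κ → ℂ) : (lineProj x)ᴴ = lineProj x := by
  simp [lineProj, conjTranspose_vecMulVec]

theorem lineProj_mul_lineProj (x y : κ → ℂ) :
    lineProj x * lineProj y = (star x ⬝ᵥ y) • vecMulVec x (star y) := by
  rw [lineProj, lineProj, vecMulVec_mul_vecMulVec, vecMulVec_smul]

theorem trace_lineProj_mul_lineProj (x y : κ → ℂ) :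
    trace (lineProj x * lineProj y) = (‖x ⬝ᵥ star y‖ ^ 2 : ℝ) := by
  rw [lineProj_mul_lineProj, trace_smul, trace_vecMulVec, smul_eq_mul, star_dotProduct,
    dotProduct_comm (star y), ← Complex.normSq_eq_norm_sq, Complex.normSq_eq_conj_mul_self]
  rfl

theorem lineProj_mul_lineProj_mul_self (x y : κ → ℂ) :
    lineProj x * lineProj y * lineProj x = trace (lineProj x * lineProj y) • lineProj x := by
  rw [lineProj_mul_lineProj, trace_smul, trace_vecMulVec, smul_mul_assoc, lineProj,
    vecMulVec_mul_vecMulVec, vecMulVec_smul, smul_smul, dotProduct_comm (star y), smul_eq_mul]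

variable {x : κ → ℂ} (hx : star x ⬝ᵥ x = 1)
include hx

theorem lineProj_mul_self : lineProj x * lineProj x = lineProj x := by
  rw [lineProj_mul_lineProj, hx, one_smul, lineProj]

theorem trace_lineProj : trace (lineProj x) = 1 := by
  rw [lineProj, trace_vecMulVec, dotProduct_comm, hx]

end LineProj

section Features

variable {κ : Type*} [Fintype κ] [DecidableEq κ]

def welchFeature (x : κ → ℂ) : Matrix κ κ ℂ := (Fintype.card κ : ℂ) • lineProj x - 1

def levenshteinFeature (x : κ → ℂ) : Matrix (κ × κ) (κ × κ) ℂ :=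
  let n : ℂ := Fintype.card κ
  ((n + 1) * (n + 2)) • (lineProj x ⊗ₖ lineProj x)
    - (n + 1) • ((lineProj x ⊗ₖ 1 + 1 ⊗ₖ lineProj x) * (1 + tensorSwap κ ℂ))
    + (1 + tensorSwap κ ℂ)

variable {x y : κ → ℂ} (hx : star x ⬝ᵥ x = 1) (hy : star y ⬝ᵥ y = 1)
include hx hy

theorem trace_welchFeature_mul :
    trace (welchFeature x * (welchFeature y)ᴴ) =
      (Fintype.card κ : ℂ) ^ 2 * trace (lineProj x * lineProj y) - Fintype.card κ := by
  simp only [welchFeature, conjTranspose_sub, conjTranspose_smul, star_natCast,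
    conjTranspose_lineProj, conjTranspose_one, mul_sub, sub_mul, mul_smul_comm, smul_mul_assoc,
    one_mul, mul_one, trace_sub, trace_smul, smul_eq_mul, trace_lineProj hx, trace_lineProj hy,
    trace_one]
  ring

theorem trace_levenshteinFeature_mul :
    trace (levenshteinFeature x * (levenshteinFeature y)ᴴ) =
      let n : ℂ := Fintype.card κ
      let t := trace (lineProj x * lineProj y)
      (n + 1) * (n + 2) * ((n + 1) * (n + 2) * t ^ 2 - 4 * (n + 1) * t + 2) := by
  have hPx := lineProj_mul_self hx
  have hPy := lineProj_mul_self hy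
  have hPx_mul : ∀ M, lineProj x * (lineProj x * M) = lineProj x * M := by
    intro M; rw [← mul_assoc, hPx]
  have hyx : trace (lineProj y * lineProj x) = trace (lineProj x * lineProj y) :=
    trace_mul_comm _ _
  have hxyx := lineProj_mul_lineProj_mul_self x y
  have hyxy := lineProj_mul_lineProj_mul_self y x
  rw [mul_assoc] at hxyx hyxy
  rw [hyx] at hyxy
  -- every product is brought to the form `A ⊗ₖ B` or `(A ⊗ₖ B) * tensorSwap κ ℂ` before tracing
  simp only [levenshteinFeature, conjTranspose_add, conjTranspose_sub, conjTranspose_smul,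
    conjTranspose_mul, conjTranspose_kronecker, conjTranspose_one, conjTranspose_lineProj,
    conjTranspose_tensorSwap, add_mul, mul_add, sub_mul, mul_sub, smul_mul_assoc, mul_smul_comm,
    mul_assoc, one_mul, mul_one, kronecker_mul_kronecker_mul, tensorSwap_mul_kronecker_mul,
    ← mul_kronecker_mul, tensorSwap_mul_kronecker, tensorSwap_mul_self, hPx_mul, hxyx, hyxy, hPx, hPy,
    trace_add, trace_sub, trace_smul, trace_kronecker, trace_kronecker_mul_tensorSwap,
    trace_tensorSwap, trace_one, Fintype.card_prod, trace_lineProj hx, trace_lineProj hy, hyx,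
    smul_eq_mul, star_add, star_mul', star_natCast, star_one, star_ofNat]
  push_cast
  ring

end Features

theorem sum_sum_nonneg_of_trace_eq {ι m : Type*} [Fintype ι] [Fintype m] (F : ι → Matrix m m ℂ)
    (k : ι → ι → ℝ) (hk : ∀ i j, trace (F i * (F j)ᴴ) = k i j) : 0 ≤ ∑ i, ∑ j, k i j := by
  have hsum : ((∑ i, ∑ j, k i j : ℝ) : ℂ) = trace ((∑ i, F i) * (∑ i, F i)ᴴ) := by
    simp only [conjTranspose_sum, Matrix.sum_mul, Matrix.mul_sum, trace_sum, hk]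
    push_cast
    exact Finset.sum_comm
  open scoped ComplexOrder in
  have := (posSemidef_self_mul_conjTranspose (∑ i, F i)).trace_nonneg
  rw [← hsum] at this
  exact_mod_cast this

theorem sum_sum_sq_le_of_offDiag_le {ι : Type*} [Fintype ι] [DecidableEq ι] (t : ι → ι → ℝ)
    {a : ℝ} (hdiag : ∀ i, t i i = 1) (hnonneg : ∀ i j, 0 ≤ t i j)
    (hoff : ∀ i j, i ≠ j → t i j ≤ a) :
    ∑ i, ∑ j, t i j ^ 2 ≤ Fintype.card ι + a * (∑ i, ∑ j, t i j - Fintype.card ι) := by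
  have hpt : ∀ i j, t i j ^ 2 ≤ a * t i j + if i = j then 1 - a else 0 := by
    intro i j
    split_ifs with h
    · subst h; simp [hdiag]
    · simpa [sq] using mul_le_mul_of_nonneg_right (hoff i j h) (hnonneg i j)
  calc ∑ i, ∑ j, t i j ^ 2 ≤ ∑ i, ∑ j, (a * t i j + if i = j then 1 - a else 0) :=
        sum_le_sum fun i _ => sum_le_sum fun j _ => hpt i j
    _ = Fintype.card ι + a * (∑ i, ∑ j, t i j - Fintype.card ι) := by
        simp only [sum_add_distrib, ← mul_sum, sum_ite_eq, mem_univ, if_true, sum_const,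
          card_univ, nsmul_eq_mul]
        ring

theorem levenshtein_of_moments {n N S₁ S₂ a : ℝ} (hn : 1 ≤ n) (hN : n < N)
    (h₁ : N ^ 2 ≤ n * S₁) (h₂ : 4 * (n + 1) * S₁ - 2 * N ^ 2 ≤ (n + 1) * (n + 2) * S₂)
    (h₃ : S₂ ≤ N + a * (S₁ - N)) :
    2 * N - n ^ 2 - n ≤ a * ((n + 1) * (N - n)) := by
  set β := 4 - a * (n + 2)
  have hS : (n + 1) * β * S₁ ≤ 2 * N ^ 2 + (n + 1) * (n + 2) * N * (1 - a) := by
    nlinarith [mul_le_mul_of_nonneg_left h₃ (by positivity : (0:ℝ) ≤ (n + 1) * (n + 2))]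
  suffices h : 0 ≤ (n + 2) * (a * ((n + 1) * (N - n)) - (2 * N - n ^ 2 - n)) by
    nlinarith
  -- for `β ≤ 0` the bound holds outright; for `β > 0` insert the Welch bound `h₁` into `hS`
  rcases le_or_gt β 0 with hβ | hβ
  · nlinarith [mul_nonneg (neg_nonneg.mpr hβ) (by nlinarith : (0:ℝ) ≤ (n + 1) * (N - n)),
      mul_nonneg (by linarith : (0:ℝ) ≤ n - 1) (by positivity : (0:ℝ) ≤ n * (n + 2))]
  · have h : (n + 1) * β * N ^ 2 ≤ n * (2 * N ^ 2 + (n + 1) * (n + 2) * N * (1 - a)) := by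
      nlinarith [mul_le_mul_of_nonneg_left h₁ (by positivity : (0:ℝ) ≤ (n + 1) * β)]
    refine nonneg_of_mul_nonneg_right ?_ (by linarith : (0:ℝ) < N)
    nlinarith

section Levenshtein

variable {ι κ : Type*} [Fintype ι] [Fintype κ] [DecidableEq κ]
  (x : ι → κ → ℂ) (hx : ∀ i, star (x i) ⬝ᵥ x i = 1)
include hx

theorem card_sq_le_mul_sum_norm_sq [Nonempty κ] :
    (Fintype.card ι : ℝ) ^ 2 ≤ Fintype.card κ * ∑ i, ∑ j, ‖x i ⬝ᵥ star (x j)‖ ^ 2 := by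
  have h := sum_sum_nonneg_of_trace_eq (fun i => welchFeature (x i))
    (fun i j => (Fintype.card κ : ℝ) ^ 2 * ‖x i ⬝ᵥ star (x j)‖ ^ 2 - Fintype.card κ)
    fun i j => by
      rw [trace_welchFeature_mul (hx i) (hx j), trace_lineProj_mul_lineProj]; push_cast; ring
  simp only [sum_sub_distrib, ← mul_sum, sum_const, card_univ, nsmul_eq_mul] at h
  have hn : (0 : ℝ) < Fintype.card κ := by exact_mod_cast Fintype.card_pos
  nlinarith

theorem sum_norm_sq_le_sum_norm_pow_four :
    4 * (Fintype.card κ + 1) * ∑ i, ∑ j, ‖x i ⬝ᵥ star (x j)‖ ^ 2 - 2 * (Fintype.card ι : ℝ) ^ 2 ≤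
      (Fintype.card κ + 1) * (Fintype.card κ + 2) * ∑ i, ∑ j, (‖x i ⬝ᵥ star (x j)‖ ^ 2) ^ 2 := by
  have h := sum_sum_nonneg_of_trace_eq (fun i => levenshteinFeature (x i))
    (fun i j => let n : ℝ := Fintype.card κ
      (n + 1) * (n + 2) * ((n + 1) * (n + 2) * (‖x i ⬝ᵥ star (x j)‖ ^ 2) ^ 2
        - 4 * (n + 1) * ‖x i ⬝ᵥ star (x j)‖ ^ 2 + 2)) fun i j => by
      rw [trace_levenshteinFeature_mul (hx i) (hx j), trace_lineProj_mul_lineProj]; push_cast; ring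
  simp only [← mul_sum, sum_add_distrib, sum_sub_distrib, sum_const, card_univ,
    nsmul_eq_mul] at h
  have hc : (0 : ℝ) < (Fintype.card κ + 1) * (Fintype.card κ + 2) := by positivity
  nlinarith

theorem levenshtein_bound [Nonempty κ] {lam : ℝ}
    (hlam : ∀ i j, i ≠ j → ‖x i ⬝ᵥ star (x j)‖ ≤ lam) (hN : Fintype.card κ < Fintype.card ι) :
    Real.sqrt ((2 * Fintype.card ι - Fintype.card κ ^ 2 - Fintype.card κ) /
      ((Fintype.card κ + 1) * (Fintype.card ι - Fintype.card κ) : ℝ)) ≤ lam := by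
  classical
  obtain ⟨i, j, hij⟩ := Fintype.exists_pair_of_one_lt_card (lt_of_le_of_lt Fintype.card_pos hN)
  have hlam0 : 0 ≤ lam := (norm_nonneg _).trans (hlam i j hij)
  have hN' : (Fintype.card κ : ℝ) < Fintype.card ι := by exact_mod_cast hN
  have hmoments := levenshtein_of_moments (by exact_mod_cast Fintype.card_pos) hN'
    (card_sq_le_mul_sum_norm_sq x hx) (sum_norm_sq_le_sum_norm_pow_four x hx)
    (sum_sum_sq_le_of_offDiag_le _ (fun i => by rw [dotProduct_comm, hx, norm_one, one_pow])
      (fun _ _ => by positivity) fun i j hij => pow_le_pow_left₀ (norm_nonneg _) (hlam i j hij) 2)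
  refine (Real.sqrt_le_sqrt ?_).trans_eq (Real.sqrt_sq hlam0)
  rw [div_le_iff₀ (by nlinarith)]
  linarith

end Levenshtein

section TimeFrequencyShifts

variable {n : ℕ} [NeZero n]

theorem ML_apply (w τ : ZMod n) (ψ : ZMod n → ℂ) (t : ZMod n) :
    ML n w τ ψ t = ZMod.stdAddChar (w * t) * ψ (t + τ) := by
  have h : ((w.val * t.val : ℕ) : ZMod n) = w * t := by simp
  rw [ML, ZMod.stdAddChar_apply, ← h, ZMod.toCircle_natCast]
  push_cast
  rfl

theorem star_dotProduct_self_of_isUnitSignal {φ : ZMod n → ℂ} (h : IsUnitSignal n φ) :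
    star φ ⬝ᵥ φ = 1 := by
  have h' : star φ ⬝ᵥ φ = ((∑ t, ‖φ t‖ ^ 2 : ℝ) : ℂ) := by
    push_cast
    simp only [dotProduct, Pi.star_apply, ← starRingEnd_apply, Complex.conj_mul']
  rw [h', h, ofReal_one]

theorem star_dotProduct_self_ML (w τ : ZMod n) (ψ : ZMod n → ℂ) :
    star (ML n w τ ψ) ⬝ᵥ ML n w τ ψ = star ψ ⬝ᵥ ψ := by
  simp only [dotProduct, Pi.star_apply, ML_apply, ← starRingEnd_apply, map_mul]
  rw [← Equiv.sum_comp (Equiv.addRight τ) (fun s => conj (ψ s) * ψ s)]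
  refine Finset.sum_congr rfl fun t _ => ?_
  have he : conj (ZMod.stdAddChar (w * t)) * ZMod.stdAddChar (w * t) = 1 := by
    rw [Complex.conj_mul', AddChar.norm_apply, ofReal_one, one_pow]
  simp only [Equiv.coe_addRight]
  linear_combination (conj (ψ (t + τ)) * ψ (t + τ)) * he

theorem norm_inn_ML_ML (f g : ZMod n → ℂ) (w τ w' τ' : ZMod n) :
    ‖inn n (ML n w τ f) (ML n w' τ' g)‖ = ‖inn n f (ML n (w' - w) (τ' - τ) g)‖ := by
  have key : inn n (ML n w τ f) (ML n w' τ' g) =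
      ZMod.stdAddChar ((w' - w) * τ) * inn n f (ML n (w' - w) (τ' - τ) g) := by
    simp only [inn, ML_apply, Finset.mul_sum]
    rw [← Equiv.sum_comp (Equiv.subRight τ)]
    refine Finset.sum_congr rfl fun s _ => ?_
    have he : ZMod.stdAddChar (w * (s - τ)) * ZMod.stdAddChar (-(w' * (s - τ))) =
        ZMod.stdAddChar ((w' - w) * τ) * (ZMod.stdAddChar (-((w' - w) * s)) : ℂ) := by
      rw [← AddChar.map_add_eq_mul, ← AddChar.map_add_eq_mul]
      ring_nf
    simp only [Equiv.subRight_apply, map_mul, ← AddChar.map_neg_eq_conj, sub_add_cancel,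
      show s - τ + τ' = s + (τ' - τ) by abel]
    linear_combination (f s * conj (g (s + (τ' - τ)))) * he
  rw [key, norm_mul, AddChar.norm_apply, one_mul]

noncomputable def timeFrequencyShifts {J : Type*} (φ : J → ZMod n → ℂ) (p : J × ZMod n × ZMod n) :
    ZMod n → ℂ :=
  ML n p.2.1 p.2.2 (φ p.1)

theorem norm_timeFrequencyShifts_le {J : Type*} {φ : J → ZMod n → ℂ} {lam : ℝ}
    (hlam : ∀ j j' w τ, (j ≠ j' ∨ (τ, w) ≠ (0, 0)) → ‖inn n (φ j) (ML n w τ (φ j'))‖ ≤ lam)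
    {p q : J × ZMod n × ZMod n} (hpq : p ≠ q) :
    ‖timeFrequencyShifts φ p ⬝ᵥ star (timeFrequencyShifts φ q)‖ ≤ lam := by
  obtain ⟨j, w, τ⟩ := p
  obtain ⟨j', w', τ'⟩ := q
  refine (norm_inn_ML_ML (φ j) (φ j') w τ w' τ').trans_le (hlam _ _ _ _ ?_)
  by_cases hj : j = j'
  · subst hj
    refine Or.inr fun h => hpq ?_
    simp only [Prod.mk.injEq, sub_eq_zero] at h
    rw [h.1, h.2]
  · exact Or.inl hj

end TimeFrequencyShifts

theorem stmt_19_general (n M : ℕ) [NeZero n] (hM : 1 < M)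
    (φ : Fin M → ZMod n → ℂ)
    (hunit : ∀ j, IsUnitSignal n (φ j)) (lam : ℝ)
    (hlam : IsGreatest {r : ℝ | ∃ j j' : Fin M, ∃ w τ : ZMod n,
      (j ≠ j' ∨ (τ, w) ≠ (0, 0)) ∧ r = ‖inn n (φ j) (ML n w τ (φ j'))‖} lam) :
    lam ≥ Real.sqrt ((2 * (n : ℝ) * M - n - 1) / (((n : ℝ) + 1) * ((n : ℝ) * M - 1))) := by
  have hn : 0 < n := Nat.pos_of_neZero n
  have hcard : Fintype.card (Fin M × ZMod n × ZMod n) = M * (n * n) := by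
    simp [Fintype.card_prod, ZMod.card]
  have h := levenshtein_bound (timeFrequencyShifts φ)
    (fun p => by rw [timeFrequencyShifts, star_dotProduct_self_ML,
      star_dotProduct_self_of_isUnitSignal (hunit p.1)])
    (fun p q => norm_timeFrequencyShifts_le fun j j' w τ h => hlam.2 ⟨j, j', w, τ, h, rfl⟩)
    (by rw [hcard, ZMod.card]; nlinarith)
  rw [hcard, ZMod.card] at h
  push_cast at h
  convert h using 2
  have hn' : (n : ℝ) ≠ 0 := by exact_mod_cast hn.ne'
  rw [← mul_div_mul_left _ _ hn']
  ring_nf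

theorem stmt_19 (n M : ℕ) [NeZero n] (hn : 1 < n) (hM : 1 < M)
    (φ : Fin M → ZMod n → ℂ) (hinj : Function.Injective φ)
    (hunit : ∀ j, IsUnitSignal n (φ j)) (lam : ℝ)
    (hlam : IsGreatest {r : ℝ | ∃ j j' : Fin M, ∃ w τ : ZMod n,
      (j ≠ j' ∨ (τ, w) ≠ (0, 0)) ∧ r = ‖inn n (φ j) (ML n w τ (φ j'))‖} lam)
    (hlt : lam < 1) :
    lam ≥ Real.sqrt ((2 * (n : ℝ) * M - n - 1) / (((n : ℝ) + 1) * ((n : ℝ) * M - 1))) :=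
  stmt_19_general n M hM φ hunit lam hlam
end
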